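/- arXiv:2411.15987 — 5 statements merged into one kernel-verified Lean document; each statement's English description precedes it below -/
import Mathlib

section
/- Let G be a group, (X, 𝒜, μ) a probability space, and T a measure-preserving right anti-action of G on X (so T_{gh} = T_h ∘ T_g and μ(T_g⁻¹A) = μ(A)). Let A ∈ 𝒜 with μ(A) > 0 and let (g_n) be any sequence in G. Then there exist indices i < j such that μ(A ∩ T_{g_{i+1}·…·g_j}⁻¹ A) > 0, where the product g_{i+1}·…·g_j is taken in increasing order of indices; in particular the set {g ∈ G : μ(A ∩ T_g⁻¹A) > 0} meets the right finite-product set FP_R(g_n). -/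
open MeasureTheory

/-- The product of `x_n` over `F` with indices taken in increasing order. -/
def prodInc {G : Type*} [Group G] (F : Finset ℕ) (x : ℕ → G) : G :=
  ((F.sort (· ≤ ·)).map x).prod

/-- The right finite product set of a sequence `(x_n)` in `G`. -/
def FPR {G : Type*} [Group G] (x : ℕ → G) : Set G :=
  { g | ∃ F : Finset ℕ, F.Nonempty ∧ g = prodInc F x }

lemma sort_Ioc_append {i j k : ℕ} (hij : i ≤ j) (hjk : j ≤ k) :
    (Finset.Ioc i k).sort (· ≤ ·)
      = (Finset.Ioc i j).sort (· ≤ ·) ++ (Finset.Ioc j k).sort (· ≤ ·) := by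
  set l : List ℕ := (Finset.Ioc i j).sort (· ≤ ·) ++ (Finset.Ioc j k).sort (· ≤ ·) with hl
  have hnodup : l.Nodup := by
    refine List.Nodup.append (Finset.sort_nodup _ _) (Finset.sort_nodup _ _) ?_
    intro a ha hb
    rw [Finset.mem_sort, Finset.mem_Ioc] at ha hb
    omega
  have hsorted : l.Pairwise (· ≤ ·) := by
    rw [hl, List.pairwise_append]
    refine ⟨Finset.pairwise_sort _ _, Finset.pairwise_sort _ _, ?_⟩
    intro a ha b hb
    rw [Finset.mem_sort, Finset.mem_Ioc] at ha hb
    omega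
  have htf : l.toFinset = Finset.Ioc i k := by
    rw [hl, List.toFinset_append, Finset.sort_toFinset, Finset.sort_toFinset]
    exact Finset.Ioc_union_Ioc_eq_Ioc hij hjk
  have := (List.toFinset_sort (· ≤ ·) hnodup).2 hsorted
  rw [htf] at this
  exact this

lemma prodInc_Ioc_mul {G : Type*} [Group G] (g : ℕ → G) {i j k : ℕ} (hij : i ≤ j) (hjk : j ≤ k) :
    prodInc (Finset.Ioc i k) g
      = prodInc (Finset.Ioc i j) g * prodInc (Finset.Ioc j k) g := by
  unfold prodInc
  rw [sort_Ioc_append (i := i) hij hjk, List.map_append, List.prod_append]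

/-- Pigeonhole: countably many sets of measure bounded below in a probability space
cannot be pairwise a.e. disjoint. -/
lemma exists_lt_measure_inter_pos {X : Type*} [MeasurableSpace X]
    (μ : Measure X) [IsProbabilityMeasure μ] (S : ℕ → Set X)
    (hmeas : ∀ n, MeasurableSet (S n)) {c : ENNReal} (hc : 0 < c)
    (hS : ∀ n, c ≤ μ (S n)) : ∃ n m : ℕ, n < m ∧ 0 < μ (S n ∩ S m) := by
  by_contra h
  push_neg at h
  have hd : Pairwise (Function.onFun (AEDisjoint μ) S) := by
    intro n m hnm
    rcases hnm.lt_or_gt with hlt | hlt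
    · exact le_antisymm (h n m hlt) zero_le
    · have := le_antisymm (h m n hlt) zero_le
      rwa [Set.inter_comm] at this
  have := measure_iUnion₀ hd (fun n => (hmeas n).nullMeasurableSet)
  have htop : (∑' n, μ (S n)) = ⊤ := by
    refine eq_top_iff.2 ?_
    calc (⊤ : ENNReal) = ∑' _ : ℕ, c := (ENNReal.tsum_const_eq_top_of_ne_zero hc.ne').symm
    _ ≤ ∑' n, μ (S n) := ENNReal.tsum_le_tsum hS
  have hle : μ (⋃ n, S n) ≤ 1 := prob_le_one
  rw [this, htop] at hle
  exact (by simp : ¬ ((⊤ : ENNReal) ≤ 1)) hle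

/-- For a measure-preserving right anti-action `T` of `G` on a probability space and a set `A`
of positive measure, for any sequence `(g_n)` there are `i < j` with
`μ(A ∩ T_{g_{i+1}⋯g_j}⁻¹ A) > 0`; in particular `{g : μ(A ∩ T_g⁻¹A) > 0}` meets `FP_R(g_n)`. -/
theorem stmt1 {G : Type*} [Group G] {X : Type*} [MeasurableSpace X]
    (μ : Measure X) [IsProbabilityMeasure μ]
    (T : G → X → X) (hanti : ∀ g h : G, T (g * h) = T h ∘ T g)
    (hmp : ∀ g : G, MeasurePreserving (T g) μ μ)
    (A : Set X) (hA : MeasurableSet A) (hApos : 0 < μ A) (g : ℕ → G) :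
    ∃ i j : ℕ, i < j ∧ prodInc (Finset.Ioc i j) g ∈ FPR g ∧
      0 < μ (A ∩ T (prodInc (Finset.Ioc i j) g) ⁻¹' A) := by
  set P : ℕ → G := fun n => prodInc (Finset.Ioc 0 (n + 1)) g with hP
  set S : ℕ → Set X := fun n => T (P n) ⁻¹' A with hSdef
  have hmeasg : ∀ h : G, Measurable (T h) := fun h => (hmp h).measurable
  have hSmeas : ∀ n, MeasurableSet (S n) := fun n => hA.preimage (hmeasg _)
  have hSμ : ∀ n, μ A ≤ μ (S n) := by
    intro n
    rw [hSdef]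
    exact le_of_eq ((hmp (P n)).measure_preimage hA.nullMeasurableSet).symm
  obtain ⟨n, m, hnm, hpos⟩ := exists_lt_measure_inter_pos μ S hSmeas hApos hSμ
  refine ⟨n + 1, m + 1, by omega, ⟨Finset.Ioc (n+1) (m+1), ⟨m + 1, by simp [Finset.mem_Ioc]; omega⟩, rfl⟩, ?_⟩
  set Q : G := prodInc (Finset.Ioc (n+1) (m+1)) g with hQ
  have hsplit : P m = P n * Q := by
    rw [hP, hQ]
    exact prodInc_Ioc_mul g (i := 0) (j := n+1) (k := m+1) (by omega) (by omega)
  have hTm : T (P m) = T Q ∘ T (P n) := by rw [hsplit, hanti]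
  have hinter : S n ∩ S m = T (P n) ⁻¹' (A ∩ T Q ⁻¹' A) := by
    rw [hSdef]
    simp only [Set.preimage_inter, hTm, Set.preimage_comp]
  have : μ (S n ∩ S m) = μ (A ∩ T Q ⁻¹' A) := by
    rw [hinter]
    exact (hmp (P n)).measure_preimage
      ((hA.inter (hA.preimage (hmeasg Q))).nullMeasurableSet)
  rwa [this] at hpos
end

section
/- Let G be a group and let p be an idempotent ultrafilter on G with respect to the operation p•q defined by: A ∈ p•q iff {x ∈ G : Ax⁻¹ ∈ p} ∈ q. If A ∈ p, then A contains a left finite product set FP_L(x_n) for some sequence (x_n) in G, where FP_L(x_n) consists of all products ∏_{n∈F} x_n with indices taken in decreasing order over finite nonempty F ⊆ ℕ. -/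
/-- The product of `x_n` over `F` with indices taken in decreasing order. -/
def prodDec {G : Type*} [Group G] (F : Finset ℕ) (x : ℕ → G) : G :=
  ((F.sort (· ≤ ·)).reverse.map x).prod

/-- The left finite product set of a sequence `(x_n)` in `G`. -/
def FPL {G : Type*} [Group G] (x : ℕ → G) : Set G :=
  { g | ∃ F : Finset ℕ, F.Nonempty ∧ g = prodDec F x }

/-- The Stone–Čech convolution `p • q` on ultrafilters: `A ∈ p • q ↔ {x | Ax⁻¹ ∈ p} ∈ q`. -/
def umul {G : Type*} [Group G] (p q : Ultrafilter G) : Ultrafilter G :=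
  q.bind fun x => p.map (· * x)

/-!
Reversing products identifies `G` with its opposite group `Gᵐᵒᵖ`, and under this identification
`umul` becomes the usual convolution of ultrafilters (`Ultrafilter.mul`, outer factor on the left).
So `p.map op` is an idempotent ultrafilter on `Gᵐᵒᵖ`, and the Galvin–Glazer theorem
(`Hindman.exists_FP_of_large`) gives a sequence whose products in increasing order of indices lie
in `unop ⁻¹' A`; read back in `G`, these are the products in decreasing order.
-/

open Hindman MulOpposite

attribute [local instance] Ultrafilter.semigroup

theorem Ultrafilter.map_op_umul {G : Type*} [Group G] (p q : Ultrafilter G) :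
    (umul p q).map op = q.map op * p.map op :=
  rfl

theorem prodDec_eq_unop_prod {G : Type*} [Group G] (F : Finset ℕ) (x : ℕ → G) :
    prodDec F x = unop ((F.sort (· ≤ ·)).map (op ∘ x)).prod := by
  rw [prodDec, unop_list_prod, List.map_map, List.map_reverse]
  rfl

namespace Hindman

theorem FP_drop_subset_FP_drop {M : Type*} [Semigroup M] (b : Stream' M) {k n : ℕ} (h : k ≤ n) :
    FP (b.drop n) ⊆ FP (b.drop k) := by
  obtain ⟨d, rfl⟩ := Nat.exists_eq_add_of_le h
  rw [← Stream'.drop_drop]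
  exact FP_drop_subset_FP (b.drop k) d

theorem prod_sort_mem_FP_drop {M : Type*} [Monoid M] (b : Stream' M) (F : Finset ℕ) :
    ∀ k, F.Nonempty → (∀ i ∈ F, k ≤ i) → ((F.sort (· ≤ ·)).map b.get).prod ∈ FP (b.drop k) := by
  induction F using Finset.induction_on_min with
  | empty => simp
  | insert m s hlt ih =>
    intro k _ hk
    rw [Finset.sort_insert _ (fun i hi => (hlt i hi).le) (fun hm => lt_irrefl m (hlt m hm)),
      List.map_cons, List.prod_cons]
    refine FP_drop_subset_FP_drop b (hk m (Finset.mem_insert_self m s)) ?_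
    rw [← Stream'.head_drop]
    rcases s.eq_empty_or_nonempty with rfl | hs
    · simpa using FP.head (b.drop m)
    · refine FP.cons _ _ ?_
      rw [Stream'.tail_drop']
      exact ih (m + 1) hs hlt

theorem prod_sort_mem_FP {M : Type*} [Monoid M] (b : Stream' M) {F : Finset ℕ} (hF : F.Nonempty) :
    ((F.sort (· ≤ ·)).map b.get).prod ∈ FP b :=
  prod_sort_mem_FP_drop b F 0 hF fun i _ => i.zero_le

end Hindman

/-- If `p` is an idempotent ultrafilter in `(βG, •)` and `A ∈ p`, then `A` contains a
left finite product set `FP_L(x_n)` for some sequence `(x_n)` in `G`. -/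
theorem stmt3 {G : Type*} [Group G] (p : Ultrafilter G) (hp : umul p p = p)
    (A : Set G) (hA : A ∈ p) :
    ∃ x : ℕ → G, FPL x ⊆ A := by
  have hidem : p.map op * p.map op = p.map op := by
    rw [← Ultrafilter.map_op_umul, hp]
  obtain ⟨b, hb⟩ := exists_FP_of_large _ hidem (unop ⁻¹' A) hA
  refine ⟨unop ∘ b.get, ?_⟩
  rintro _ ⟨F, hF, rfl⟩
  rw [prodDec_eq_unop_prod]
  exact hb (prod_sort_mem_FP b hF)
end

section
/- Let G be a group, m ≥ 1, and χ : G^m → Fin r a finite coloring. Suppose that for every finite coloring χ' of G^m, the set D_k(χ') = { g ∈ G : ∃ x ∈ G^m, the right corner set {x, R_g^{(1)}x, R_g^{(1)}R_g^{(2)}x, …, R_g^{(1)}…R_g^{(k)}x} is χ'-monochromatic } is left IP*. Then for every finite coloring χ of G^m, the shifted-coordinates set D̃_k(χ) = { g ∈ G : ∃ x ∈ G^m, {x, R_g^{(2)}x, R_g^{(2)}R_g^{(3)}x, …, R_g^{(2)}…R_g^{(k+1)}x} is χ-monochromatic } is also left IP*. -/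
/-- `X` is left IP*: it meets `FP_L(x_n)` for every sequence `(x_n)`. -/
def leftIPStar {G : Type*} [Group G] (X : Set G) : Prop :=
  ∀ x : ℕ → G, (X ∩ FPL x).Nonempty

/-- The `i`-th point of the right corner configuration along coordinates `(1,…,k)`:
the first `i` coordinates of `x` are multiplied by `g` on the right. -/
def cornerPt {G : Type*} [Group G] {m : ℕ} (x : Fin m → G) (g : G) (i : ℕ) : Fin m → G :=
  fun t => if (t : ℕ) < i then x t * g else x t

/-- The `i`-th point of the right corner configuration along shifted coordinates `(2,…,k+1)`:
coordinates `2,…,i+1` of `x` are multiplied by `g` on the right. -/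
def cornerPtShift {G : Type*} [Group G] {m : ℕ} (x : Fin m → G) (g : G) (i : ℕ) : Fin m → G :=
  fun t => if 1 ≤ (t : ℕ) ∧ (t : ℕ) ≤ i then x t * g else x t

/-!
Cyclically rotating the coordinates of `G^m` one step (coordinate `t` moves to `t + 1`) turns
every right corner along the first `k` coordinates into a right corner along coordinates
`2, …, k + 1`, since `k < m` keeps the rotation from wrapping around inside the corner. So
`D̃_k(χ)` contains `D_k(χ ∘ rotation)`, which is left IP* by hypothesis.
-/

theorem leftIPStar.mono {G : Type*} [Group G] {X Y : Set G} (hXY : X ⊆ Y)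
    (hX : leftIPStar X) : leftIPStar Y := fun x =>
  (hX x).mono (Set.inter_subset_inter_left _ hXY)

theorem val_lt_iff_one_le_finRotate_le {m i : ℕ} (hi : i < m) (s : Fin m) :
    (s : ℕ) < i ↔ 1 ≤ (finRotate m s : ℕ) ∧ (finRotate m s : ℕ) ≤ i := by
  obtain ⟨n, rfl⟩ := Nat.exists_eq_succ_of_ne_zero (Nat.ne_zero_of_lt hi)
  rw [coe_finRotate]
  split_ifs with hs
  · simp only [hs, Fin.val_last]
    omega
  · omega

theorem cornerPt_comp_finRotate_symm {G : Type*} [Group G] {m i : ℕ} (hi : i < m)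
    (x : Fin m → G) (g : G) :
    cornerPt x g i ∘ (finRotate m).symm = cornerPtShift (x ∘ (finRotate m).symm) g i := by
  funext t
  obtain ⟨s, rfl⟩ := (finRotate m).surjective t
  simp only [Function.comp_apply, Equiv.symm_apply_apply, cornerPt, cornerPtShift,
    val_lt_iff_one_le_finRotate_le hi s]

theorem stmt7_general {G : Type*} [Group G] (m k : ℕ) (hkm : k < m)
    (H : ∀ (r' : ℕ) (χ' : (Fin m → G) → Fin r'),
      leftIPStar { g : G | ∃ (x : Fin m → G) (c : Fin r'),
        ∀ i ≤ k, χ' (cornerPt x g i) = c })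
    (r : ℕ) (χ : (Fin m → G) → Fin r) :
    leftIPStar { g : G | ∃ (x : Fin m → G) (c : Fin r),
      ∀ i ≤ k, χ (cornerPtShift x g i) = c } := by
  refine (H r fun v => χ (v ∘ (finRotate m).symm)).mono ?_
  rintro g ⟨x, c, hc⟩
  refine ⟨x ∘ (finRotate m).symm, c, fun i hi => ?_⟩
  rw [← cornerPt_comp_finRotate_symm (hi.trans_lt hkm)]
  exact hc i hi

/-- If `D_k(χ')` is left IP* for every finite coloring `χ'` of `G^m`, then the
shifted-coordinates set `D̃_k(χ)` is left IP* for every finite coloring `χ`. -/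
theorem stmt7 {G : Type*} [Group G] (m k : ℕ) (hk1 : 1 ≤ k) (hkm : k < m)
    (H : ∀ (r' : ℕ) (χ' : (Fin m → G) → Fin r'),
      leftIPStar { g : G | ∃ (x : Fin m → G) (c : Fin r'),
        ∀ i ≤ k, χ' (cornerPt x g i) = c })
    (r : ℕ) (χ : (Fin m → G) → Fin r) :
    leftIPStar { g : G | ∃ (x : Fin m → G) (c : Fin r),
      ∀ i ≤ k, χ (cornerPtShift x g i) = c } :=
  stmt7_general m k hkm H r χ
end

section
/- Let G be a group and suppose FP_L(y_n^{(r-1)}) ⊆ FP_L(y_n^{(r-2)}) ⊆ … ⊆ FP_L(y_n^{(0)}) where each (y_n^{(j)}) is a product subsystem of (y_n^{(j-1)}) for 1 ≤ j ≤ r-1. Then for any elements x₀, …, x_{r-2} with x_j ∈ FP_L(y_n^{(j)}), there exists x ∈ FP_L(y_n^{(r-1)}) such that x·x_j ∈ FP_L(y_n^{(j)}) for all 0 ≤ j ≤ r-2. -/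
/-- `(y_n)` is a product subsystem of `(x_n)`: there are finite nonempty sets `F(n)` with
`max F(n) < min F(n+1)` and `y_n = ∏_{f ∈ F(n), decreasing} x_f`. -/
def IsProductSubsystem {G : Type*} [Group G] (y x : ℕ → G) : Prop :=
  ∃ F : ℕ → Finset ℕ, (∀ n, (F n).Nonempty) ∧
    (∀ n, ∀ a ∈ F n, ∀ b ∈ F (n + 1), a < b) ∧
    (∀ n, y n = prodDec (F n) x)

open Finset Filter

lemma Finset.sort_union_of_forall_lt {α : Type*} [LinearOrder α] {A B : Finset α} (h : ∀ a ∈ A, ∀ b ∈ B, b < a) :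
    (A ∪ B).sort (· ≤ ·) = B.sort (· ≤ ·) ++ A.sort (· ≤ ·) := by
  refine List.Perm.eq_of_pairwise' (r := (· ≤ ·)) (pairwise_sort _ _) ?_ ?_
  · rw [List.pairwise_append]
    refine ⟨pairwise_sort _ _, pairwise_sort _ _, fun b hb a ha => ?_⟩
    rw [mem_sort] at ha hb
    exact (h a ha b hb).le
  · refine List.perm_of_nodup_nodup_toFinset_eq (sort_nodup _ _) ?_ (by simp [union_comm])
    refine (sort_nodup _ _).append (sort_nodup _ _) fun a hB hA => ?_
    rw [mem_sort] at hA hB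
    exact (h a hA a hB).false

section Group

variable {G : Type*} [Group G]

lemma prodDec_singleton (n : ℕ) (x : ℕ → G) : prodDec {n} x = x n := by
  simp [prodDec]

lemma prodDec_union_of_forall_lt {A B : Finset ℕ} (h : ∀ a ∈ A, ∀ b ∈ B, b < a) (x : ℕ → G) :
    prodDec (A ∪ B) x = prodDec A x * prodDec B x := by
  simp [prodDec, sort_union_of_forall_lt h]

lemma apply_mem_FPL (x : ℕ → G) (n : ℕ) : x n ∈ FPL x :=
  ⟨{n}, singleton_nonempty n, (prodDec_singleton n x).symm⟩

end Group

section Blocks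

variable {F : ℕ → Finset ℕ} (hne : ∀ n, (F n).Nonempty)
  (hlt : ∀ n, ∀ a ∈ F n, ∀ b ∈ F (n + 1), a < b)
include hne hlt

lemma lt_of_mem_block_of_lt {m n : ℕ} (hmn : m < n) {a b : ℕ} (ha : a ∈ F m) (hb : b ∈ F n) :
    a < b := by
  induction n, hmn using Nat.le_induction generalizing b with
  | base => exact hlt m a ha b hb
  | succ k _ ih =>
    obtain ⟨c, hc⟩ := hne k
    exact (ih hc).trans (hlt k c hc b hb)

lemma le_of_mem_block {n a : ℕ} (ha : a ∈ F n) : n ≤ a := by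
  induction n generalizing a with
  | zero => exact a.zero_le
  | succ k ih =>
    obtain ⟨c, hc⟩ := hne k
    exact (ih hc).trans_lt (hlt k c hc a ha)

lemma prodDec_biUnion {G : Type*} [Group G] {y x : ℕ → G} (hy : ∀ n, y n = prodDec (F n) x)
    {S : Finset ℕ} (hS : S.Nonempty) : prodDec S y = prodDec (S.biUnion F) x := by
  induction S using Finset.induction_on_max with
  | empty => exact absurd hS not_nonempty_empty
  | insert a s hmax ih =>
    rcases s.eq_empty_or_nonempty with rfl | hs
    · simp [prodDec_singleton, hy a]
    have hblocks : ∀ p ∈ F a, ∀ q ∈ s.biUnion F, q < p := by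
      intro p hp q hq
      obtain ⟨b, hb, hq⟩ := mem_biUnion.mp hq
      exact lt_of_mem_block_of_lt hne hlt (hmax b hb) hq hp
    rw [insert_eq, union_biUnion, singleton_biUnion, prodDec_union_of_forall_lt hblocks,
      prodDec_union_of_forall_lt (by simpa using hmax), prodDec_singleton, hy a, ih hs]

end Blocks

namespace IsProductSubsystem

variable {G : Type*} [Group G]

protected lemma refl (x : ℕ → G) : IsProductSubsystem x x :=
  ⟨fun n => {n}, fun n => singleton_nonempty n,
    fun n a ha b hb => by simp_all, fun n => (prodDec_singleton n x).symm⟩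

protected lemma trans {z y x : ℕ → G} (hzy : IsProductSubsystem z y)
    (hyx : IsProductSubsystem y x) : IsProductSubsystem z x := by
  obtain ⟨E, hEne, hElt, hEz⟩ := hzy
  obtain ⟨F, hFne, hFlt, hFy⟩ := hyx
  refine ⟨fun n => (E n).biUnion F, fun n => (hEne n).biUnion fun c _ => hFne c, ?_,
    fun n => by rw [hEz n, prodDec_biUnion hFne hFlt hFy (hEne n)]⟩
  intro n a ha b hb
  obtain ⟨s, hs, ha⟩ := mem_biUnion.mp ha
  obtain ⟨t, ht, hb⟩ := mem_biUnion.mp hb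
  exact lt_of_mem_block_of_lt hFne hFlt (hElt n s hs t ht) ha hb

lemma of_chain {y : ℕ → ℕ → G} {m : ℕ} (h : ∀ j < m, IsProductSubsystem (y (j + 1)) (y j))
    {j : ℕ} (hj : j ≤ m) : IsProductSubsystem (y m) (y j) := by
  induction m, hj using Nat.le_induction with
  | base => exact .refl _
  | succ k _ ih => exact (h k (lt_add_one k)).trans (ih fun i hi => h i (hi.trans (lt_add_one k)))

lemma eventually_mul_mem_FPL {z y : ℕ → G} (h : IsProductSubsystem z y) {g : G}
    (hg : g ∈ FPL y) : ∀ᶠ N in atTop, z N * g ∈ FPL y := by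
  obtain ⟨S, -, rfl⟩ := hg
  obtain ⟨F, hne, hlt, hz⟩ := h
  obtain ⟨M, hM⟩ := S.exists_nat_subset_range
  filter_upwards [eventually_ge_atTop M] with N hN
  have hS_lt : ∀ a ∈ F N, ∀ b ∈ S, b < a := fun a ha b hb =>
    (mem_range.mp (hM hb)).trans_le (hN.trans (le_of_mem_block hne hlt ha))
  exact ⟨F N ∪ S, (hne N).mono subset_union_left, by rw [prodDec_union_of_forall_lt hS_lt, hz]⟩

end IsProductSubsystem

theorem stmt8_general {G : Type*} [Group G] (r : ℕ) (y : ℕ → ℕ → G)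
    (hsub : ∀ j, 1 ≤ j → j ≤ r - 1 → IsProductSubsystem (y j) (y (j - 1)))
    (xs : ℕ → G) (hxs : ∀ j, j + 2 ≤ r → xs j ∈ FPL (y j)) :
    ∃ x ∈ FPL (y (r - 1)), ∀ j, j + 2 ≤ r → x * xs j ∈ FPL (y j) := by
  have hchain (j : ℕ) (hj : j ≤ r - 1) : IsProductSubsystem (y (r - 1)) (y j) :=
    IsProductSubsystem.of_chain (fun i hi => by simpa using hsub (i + 1) (by omega) (by omega)) hj
  have hev : ∀ᶠ N in atTop, ∀ j ∈ range (r - 1), y (r - 1) N * xs j ∈ FPL (y j) :=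
    (eventually_all_finset _).2 fun j hj =>
      (hchain j (by simp at hj; omega)).eventually_mul_mem_FPL (hxs j (by simp at hj; omega))
  obtain ⟨N, hN⟩ := hev.exists
  exact ⟨y (r - 1) N, apply_mem_FPL _ N, fun j hj => hN j (by simp; omega)⟩

/-- Given a chain of product subsystems `y⁽ʳ⁻¹⁾, …, y⁽⁰⁾` and elements `x_j ∈ FP_L(y⁽ʲ⁾)` for
`0 ≤ j ≤ r-2`, there is a single `x ∈ FP_L(y⁽ʳ⁻¹⁾)` with `x·x_j ∈ FP_L(y⁽ʲ⁾)` for all such `j`. -/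
theorem stmt8 {G : Type*} [Group G] (r : ℕ) (hr : 1 ≤ r) (y : ℕ → ℕ → G)
    (hsub : ∀ j, 1 ≤ j → j ≤ r - 1 → IsProductSubsystem (y j) (y (j - 1)))
    (xs : ℕ → G) (hxs : ∀ j, j + 2 ≤ r → xs j ∈ FPL (y j)) :
    ∃ x ∈ FPL (y (r - 1)), ∀ j, j + 2 ≤ r → x * xs j ∈ FPL (y j) :=
  stmt8_general r y hsub xs hxs
end

section
/- Let G be a group and let (x_n) be a sequence in G. Then the set ⋂_{m=1}^∞ cl(FP_L(x_n : n ≥ m)) (closures taken in βG) is a nonempty closed subsemigroup of (βG, •); consequently there exists an idempotent ultrafilter p ∈ (βG, •) such that FP_L(x_n : n ≥ m) ∈ p for every m ∈ ℕ. -/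
/-- The left finite product set of the tail `(x_n : n ≥ m)`. -/
def FPLtail {G : Type*} [Group G] (x : ℕ → G) (m : ℕ) : Set G :=
  { g | ∃ F : Finset ℕ, F.Nonempty ∧ (∀ a ∈ F, m ≤ a) ∧ g = prodDec F x }

lemma mem_umul {G : Type*} [Group G] {p q : Ultrafilter G} {A : Set G} :
    A ∈ umul p q ↔ {x | {y | y * x ∈ A} ∈ p} ∈ q := by
  simp [umul, Ultrafilter.mem_map, Set.preimage]
  rfl

lemma sort_union (F₁ F₂ : Finset ℕ) (h : ∀ a ∈ F₁, ∀ b ∈ F₂, a < b) :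
    (F₁ ∪ F₂).sort (· ≤ ·) = F₁.sort (· ≤ ·) ++ F₂.sort (· ≤ ·) := by
  have hd : Disjoint F₁ F₂ := by
    rw [Finset.disjoint_left]
    intro a ha ha2
    exact absurd rfl (h a ha a ha2).ne
  refine (fun hp hs => List.Perm.eq_of_pairwise' (Finset.pairwise_sort _ _) hs hp) ?_ ?_
  · rw [← Multiset.coe_eq_coe]
    rw [Finset.sort_eq, ← Multiset.coe_add, Finset.sort_eq, Finset.sort_eq,
      ← Finset.disjUnion_eq_union _ _ hd]
    rfl
  · rw [List.pairwise_append]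
    exact ⟨Finset.pairwise_sort _ _, Finset.pairwise_sort _ _,
      fun a ha b hb => (h a ((Finset.mem_sort _).1 ha) b ((Finset.mem_sort _).1 hb)).le⟩

lemma prodDec_union {G : Type*} [Group G] (x : ℕ → G) (F₁ F₂ : Finset ℕ)
    (h : ∀ a ∈ F₁, ∀ b ∈ F₂, a < b) :
    prodDec (F₁ ∪ F₂) x = prodDec F₂ x * prodDec F₁ x := by
  simp [prodDec, sort_union F₁ F₂ h]

lemma self_mem_FPLtail {G : Type*} [Group G] (x : ℕ → G) (m : ℕ) :
    x m ∈ FPLtail x m :=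
  ⟨{m}, Finset.singleton_nonempty m, by simp, by simp [prodDec]⟩

lemma FPLtail_anti {G : Type*} [Group G] (x : ℕ → G) {m n : ℕ} (h : m ≤ n) :
    FPLtail x n ⊆ FPLtail x m := by
  rintro g ⟨F, hne, hge, rfl⟩
  exact ⟨F, hne, fun a ha => le_trans h (hge a ha), rfl⟩

lemma FPLtail_mul {G : Type*} [Group G] (x : ℕ → G) {m : ℕ} {g : G}
    (hg : g ∈ FPLtail x m) :
    ∃ N, m ≤ N ∧ ∀ y ∈ FPLtail x N, y * g ∈ FPLtail x m := by
  obtain ⟨F, hne, hge, rfl⟩ := hg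
  obtain ⟨a₀, ha₀⟩ := hne
  refine ⟨F.sup id + 1, le_trans (hge a₀ ha₀) (Nat.le_succ_of_le (Finset.le_sup (f := id) ha₀)), ?_⟩
  rintro y ⟨F', hne', hge', rfl⟩
  have hlt : ∀ a ∈ F, ∀ b ∈ F', a < b := fun a ha b hb =>
    lt_of_le_of_lt (Finset.le_sup (f := id) ha) (Nat.lt_of_succ_le (hge' b hb))
  refine ⟨F ∪ F', ⟨a₀, Finset.mem_union_left _ ha₀⟩, ?_, (prodDec_union x F F' hlt).symm⟩
  intro a ha
  rcases Finset.mem_union.1 ha with h | h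
  · exact hge a h
  · exact le_trans (le_trans (hge a₀ ha₀) (Nat.le_succ_of_le (Finset.le_sup (f := id) ha₀))) (hge' a h)

lemma umul_assoc {G : Type*} [Group G] (a b c : Ultrafilter G) :
    umul a (umul b c) = umul (umul a b) c := by
  apply Ultrafilter.coe_inj.mp
  apply Filter.ext
  intro A
  simp only [Ultrafilter.mem_coe, mem_umul, Set.mem_setOf_eq, mul_assoc]

/-- The set `⋂ₘ cl(FP_L(x_n : n ≥ m))` is a nonempty closed subsemigroup of `(βG, •)`, and
hence contains an idempotent ultrafilter `p` with `FP_L(x_n : n ≥ m) ∈ p` for all `m`. -/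
theorem stmt9 {G : Type*} [Group G] (x : ℕ → G) :
    (let S : Set (Ultrafilter G) := { p | ∀ m : ℕ, FPLtail x m ∈ p }
    S.Nonempty ∧ IsClosed S ∧ (∀ p ∈ S, ∀ q ∈ S, umul p q ∈ S) ∧
      ∃ p ∈ S, umul p p = p) := by
  intro S
  have hSeq : S = ⋂ m, { p : Ultrafilter G | FPLtail x m ∈ p } := by
    ext p
    rw [Set.mem_iInter]
    rfl
  -- nonempty
  have hne : S.Nonempty := by
    rw [hSeq]
    apply IsCompact.nonempty_iInter_of_sequence_nonempty_isCompact_isClosed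
    · intro n U hU
      exact Filter.mem_of_superset hU (FPLtail_anti x (Nat.le_succ n))
    · intro n
      exact ⟨pure (x n), self_mem_FPLtail x n⟩
    · exact (ultrafilter_isClosed_basic _).isCompact
    · intro n
      exact ultrafilter_isClosed_basic _
  -- closed
  have hcl : IsClosed S := by
    rw [hSeq]
    exact isClosed_iInter fun m => ultrafilter_isClosed_basic _
  -- subsemigroup
  have hmul : ∀ p ∈ S, ∀ q ∈ S, umul p q ∈ S := by
    intro p hp q hq m
    change ∀ m : ℕ, FPLtail x m ∈ p at hp; change ∀ m : ℕ, FPLtail x m ∈ q at hq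
    rw [mem_umul]
    apply Filter.mem_of_superset (hq m)
    intro g hg
    obtain ⟨N, _, hN⟩ := FPLtail_mul x hg
    exact Filter.mem_of_superset (hp N) fun y hy => hN y hy
  refine ⟨hne, hcl, hmul, ?_⟩
  -- idempotent via the compact subsemigroup theorem, with the flipped multiplication
  letI : Semigroup (Ultrafilter G) :=
    { mul := fun U V => umul V U
      mul_assoc := fun U V W => umul_assoc W V U }
  have cont : ∀ V : Ultrafilter G, Continuous (· * V) := by
    intro V
    apply ultrafilterBasis_is_basis.continuous_iff.2
    rintro _ ⟨s, rfl⟩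
    have : (· * V) ⁻¹' {u : Ultrafilter G | s ∈ u}
        = {u : Ultrafilter G | {x | {y | y * x ∈ s} ∈ V} ∈ u} := by
      ext u
      exact mem_umul
    rw [this]
    exact ultrafilter_isOpen_basic _
  obtain ⟨p, hp, hidem⟩ := exists_idempotent_in_compact_subsemigroup cont S hne
    (hcl.isCompact) (fun a ha b hb => hmul b hb a ha)
  exact ⟨p, hp, hidem⟩
end
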